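/- Merged DtN formula: under the hypotheses of the merge (the two block systems of the previous statement, with T^α₃₃ − T^β₃₃ invertible), the exterior fluxes satisfy (v₁, v₂) = T^τ (u₁, u₂) where T^τ = blockDiag(T^α₁₁, T^β₂₂) + col(T^α₁₃, T^β₂₃) · (T^α₃₃ − T^β₃₃)⁻¹ · row(−T^α₃₁, T^β₃₂). -/

import Mathlib

/-! Both subdomains prescribe the same flux `v₃` on the shared interface, so equating their two
expressions gives the linear system `(T^α₃₃ - T^β₃₃) u₃ = -T^α₃₁ u₁ + T^β₃₂ u₂`. Solving it for the
interface trace `u₃` and substituting into the exterior equations for `v₁` and `v₂` yields `T^τ`. -/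

namespace Matrix

variable {R : Type*} [CommRing R] {n₁ n₂ n₃ : Type*} [Fintype n₁] [Fintype n₂] [Fintype n₃]

theorem sumElim_mulVec_add_mulVec (A₁₁ : Matrix n₁ n₁ R) (A₁₃ : Matrix n₁ n₃ R)
    (B₂₂ : Matrix n₂ n₂ R) (B₂₃ : Matrix n₂ n₃ R) (u₁ : n₁ → R) (u₂ : n₂ → R) (u₃ : n₃ → R) :
    Sum.elim (A₁₁ *ᵥ u₁ + A₁₃ *ᵥ u₃) (B₂₂ *ᵥ u₂ + B₂₃ *ᵥ u₃) =
      fromBlocks A₁₁ 0 0 B₂₂ *ᵥ Sum.elim u₁ u₂ + fromRows A₁₃ B₂₃ *ᵥ u₃ := by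
  ext (i | i) <;> simp [fromBlocks_mulVec, fromRows_mulVec]

theorem sub_mulVec_eq_fromCols_mulVec_of_eq (A₃₁ : Matrix n₃ n₁ R) (A₃₃ : Matrix n₃ n₃ R)
    (B₃₂ : Matrix n₃ n₂ R) (B₃₃ : Matrix n₃ n₃ R) {u₁ : n₁ → R} {u₂ : n₂ → R} {u₃ : n₃ → R}
    (h : A₃₁ *ᵥ u₁ + A₃₃ *ᵥ u₃ = B₃₂ *ᵥ u₂ + B₃₃ *ᵥ u₃) :
    (A₃₃ - B₃₃) *ᵥ u₃ = fromCols (-A₃₁) B₃₂ *ᵥ Sum.elim u₁ u₂ := by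
  rw [fromCols_mulVec_sumElim, sub_mulVec, neg_mulVec]
  linear_combination h

theorem eq_inv_sub_mul_fromCols_mulVec_of_eq [DecidableEq n₃] (A₃₁ : Matrix n₃ n₁ R) (A₃₃ : Matrix n₃ n₃ R)
    (B₃₂ : Matrix n₃ n₂ R) (B₃₃ : Matrix n₃ n₃ R) {u₁ : n₁ → R} {u₂ : n₂ → R} {u₃ : n₃ → R}
    (h : A₃₁ *ᵥ u₁ + A₃₃ *ᵥ u₃ = B₃₂ *ᵥ u₂ + B₃₃ *ᵥ u₃) (hA : IsUnit (A₃₃ - B₃₃)) :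
    u₃ = ((A₃₃ - B₃₃)⁻¹ * fromCols (-A₃₁) B₃₂) *ᵥ Sum.elim u₁ u₂ := by
  have := hA.invertible
  rw [← mulVec_mulVec]
  exact (inv_mulVec_eq_vec (sub_mulVec_eq_fromCols_mulVec_of_eq A₃₁ A₃₃ B₃₂ B₃₃ h).symm).symm

end Matrix

theorem merged_dtn_formula
    {n₁ n₂ n₃ : Type*} [Fintype n₁] [Fintype n₂] [Fintype n₃] [DecidableEq n₃]
    (Tα11 : Matrix n₁ n₁ ℝ) (Tα13 : Matrix n₁ n₃ ℝ)
    (Tα31 : Matrix n₃ n₁ ℝ) (Tα33 : Matrix n₃ n₃ ℝ)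
    (Tβ22 : Matrix n₂ n₂ ℝ) (Tβ23 : Matrix n₂ n₃ ℝ)
    (Tβ32 : Matrix n₃ n₂ ℝ) (Tβ33 : Matrix n₃ n₃ ℝ)
    (u₁ : n₁ → ℝ) (u₂ : n₂ → ℝ) (u₃ : n₃ → ℝ)
    (v₁ : n₁ → ℝ) (v₂ : n₂ → ℝ) (v₃ : n₃ → ℝ)
    (h1 : v₁ = Tα11.mulVec u₁ + Tα13.mulVec u₃)
    (h2 : v₃ = Tα31.mulVec u₁ + Tα33.mulVec u₃)
    (h3 : v₂ = Tβ22.mulVec u₂ + Tβ23.mulVec u₃)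
    (h4 : v₃ = Tβ32.mulVec u₂ + Tβ33.mulVec u₃)
    (hUnit : IsUnit (Tα33 - Tβ33)) :
    Sum.elim v₁ v₂ =
      (Matrix.fromBlocks Tα11 0 0 Tβ22 +
        Matrix.fromRows Tα13 Tβ23 * (Tα33 - Tβ33)⁻¹ *
          Matrix.fromCols (-Tα31) Tβ32).mulVec (Sum.elim u₁ u₂) := by
  have hu₃ :=
    Matrix.eq_inv_sub_mul_fromCols_mulVec_of_eq Tα31 Tα33 Tβ32 Tβ33 (h2.symm.trans h4) hUnit
  rw [h1, h3, Matrix.sumElim_mulVec_add_mulVec, Matrix.add_mulVec, Matrix.mul_assoc,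
    ← Matrix.mulVec_mulVec, ← hu₃]
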